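/- Let p ∈ ℝ[x_1,...,x_ℓ] be a nonzero stable polynomial. Then the lowest homogeneous part of p, i.e., the nonzero homogeneous component of p of minimal degree, is again a stable polynomial. -/

import Mathlib

set_option maxHeartbeats 1000000

open MvPolynomial

/-- A univariate real polynomial is real-rooted if it is nonzero and all of its
complex roots are real. -/
def RealRooted (f : Polynomial ℝ) : Prop :=
  f ≠ 0 ∧ ∀ z : ℂ, Polynomial.aeval z f = 0 → z.im = 0

/-- A multivariate real polynomial is stable if its restriction to every line with
strictly positive direction vector is real-rooted. -/
def IsStable {σ : Type*} (p : MvPolynomial σ ℝ) : Prop :=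
  ∀ a b : σ → ℝ, (∀ i, 0 < a i) →
    RealRooted (MvPolynomial.aeval
      (fun i => Polynomial.C (a i) * Polynomial.X + Polynomial.C (b i)) p)

section Helpers

open Polynomial Finset

variable {ℓ : ℕ}

/-- eval of poly-valued aeval commutes -/
lemma eval_mv_aeval {S : Type*} [CommRing S] [Algebra ℝ S]
    (g : Fin ℓ → Polynomial S) (q : MvPolynomial (Fin ℓ) ℝ) (ρ : S) :
    Polynomial.eval ρ (MvPolynomial.aeval g q) =
      MvPolynomial.aeval (fun j => Polynomial.eval ρ (g j)) q := by
  induction q using MvPolynomial.induction_on with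
  | C a => simp [Polynomial.algebraMap_apply]
  | add p q hp hq => simp [map_add, hp, hq]
  | mul_X p i hp => simp [map_mul, hp]

lemma aeval_mv_aeval (g : Fin ℓ → Polynomial ℝ) (q : MvPolynomial (Fin ℓ) ℝ) (z : ℂ) :
    Polynomial.aeval z (MvPolynomial.aeval g q) =
      MvPolynomial.aeval (fun j => Polynomial.aeval z (g j)) q := by
  induction q using MvPolynomial.induction_on with
  | C a => simp [Polynomial.algebraMap_apply]
  | add p q hp hq => simp [map_add, hp, hq]
  | mul_X p i hp => simp [map_mul, hp]

lemma aeval_real_cast (u : Fin ℓ → ℝ) (q : MvPolynomial (Fin ℓ) ℝ) :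
    MvPolynomial.aeval (fun j => (u j : ℂ)) q = ((MvPolynomial.eval u q : ℝ) : ℂ) := by
  induction q using MvPolynomial.induction_on with
  | C a => simp [Polynomial.algebraMap_apply]
  | add p q hp hq => push_cast [map_add, hp, hq]; ring
  | mul_X p i hp => simp [map_mul, hp]

lemma key_root_le {ε : ℝ} (hε : 0 < ε) (z w a : ℂ) (ha : ε ≤ ‖w - a‖) :
    ‖z - a‖ ≤ (1 + ‖z - w‖ / ε) * ‖w - a‖ := by
  have tri : ‖z - a‖ ≤ ‖z - w‖ + ‖w - a‖ := by
    calc ‖z - a‖ = ‖(z - w) + (w - a)‖ := by ring_nf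
    _ ≤ ‖z - w‖ + ‖w - a‖ := norm_add_le _ _
  have h1 : ‖z - w‖ / ε * ε = ‖z - w‖ := div_mul_cancel₀ _ hε.ne'
  nlinarith [norm_nonneg (z - w), norm_nonneg (w - a),
    mul_le_mul_of_nonneg_left ha (div_nonneg (norm_nonneg (z - w)) hε.le)]

lemma key_multiset {ε : ℝ} (hε : 0 < ε) (z w : ℂ) (m : Multiset ℂ)
    (h : ∀ a ∈ m, ε ≤ ‖w - a‖) :
    ‖(m.map fun a => z - a).prod‖ ≤
      (1 + ‖z - w‖ / ε) ^ Multiset.card m * ‖(m.map fun a => w - a).prod‖ := by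
  induction m using Multiset.induction_on with
  | empty => simp
  | cons a m ih =>
    simp only [Multiset.map_cons, Multiset.prod_cons, norm_mul, Multiset.card_cons, pow_succ]
    have h1 : ‖z - a‖ ≤ (1 + ‖z - w‖ / ε) * ‖w - a‖ :=
      key_root_le hε z w a (h a (Multiset.mem_cons_self a m))
    have h2 := ih (fun b hb => h b (Multiset.mem_cons_of_mem hb))
    have hM : (0:ℝ) ≤ 1 + ‖z - w‖ / ε := by positivity
    calc ‖z - a‖ * ‖(m.map fun a => z - a).prod‖
        ≤ ((1 + ‖z - w‖ / ε) * ‖w - a‖) * ((1 + ‖z - w‖ / ε) ^ Multiset.card m *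
            ‖(m.map fun a => w - a).prod‖) := by
          apply mul_le_mul h1 h2 (norm_nonneg _) (by positivity)
      _ = (1 + ‖z - w‖ / ε) ^ Multiset.card m * (1 + ‖z - w‖ / ε) *
            (‖w - a‖ * ‖(m.map fun a => w - a).prod‖) := by ring

lemma compare_eval {ε : ℝ} (hε : 0 < ε) (F : Polynomial ℂ) (z w : ℂ)
    (h : ∀ ρ ∈ F.roots, ε ≤ ‖w - ρ‖) :
    ‖F.eval z‖ ≤ (1 + ‖z - w‖ / ε) ^ F.natDegree * ‖F.eval w‖ := by
  by_cases hF : F = 0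
  · simp [hF]
  have hsp : F.Splits := IsAlgClosed.splits F
  have hcard : Multiset.card F.roots = F.natDegree := splits_iff_card_roots.mp hsp
  have hfact := (C_leadingCoeff_mul_prod_multiset_X_sub_C hcard).symm
  have hev : ∀ x : ℂ, F.eval x = F.leadingCoeff * ((F.roots.map fun a => x - a).prod) := by
    intro x
    conv_lhs => rw [hfact]
    rw [Polynomial.eval_mul, Polynomial.eval_C, Polynomial.eval_multiset_prod, Multiset.map_map]
    simp [Function.comp]
  rw [hev z, hev w, norm_mul, norm_mul, ← hcard]
  calc ‖F.leadingCoeff‖ * ‖(F.roots.map fun a => z - a).prod‖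
      ≤ ‖F.leadingCoeff‖ * ((1 + ‖z - w‖ / ε) ^ Multiset.card F.roots *
          ‖(F.roots.map fun a => w - a).prod‖) :=
        mul_le_mul_of_nonneg_left (key_multiset hε z w F.roots h) (norm_nonneg _)
    _ = (1 + ‖z - w‖ / ε) ^ Multiset.card F.roots *
          (‖F.leadingCoeff‖ * ‖(F.roots.map fun a => w - a).prod‖) := by ring

variable {ℓ : ℕ}

lemma natDegree_aeval_le (g : Fin ℓ → Polynomial ℂ) (hg : ∀ i, (g i).natDegree ≤ 1)
    (q : MvPolynomial (Fin ℓ) ℝ) :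
    (MvPolynomial.aeval g q).natDegree ≤ q.totalDegree := by
  rw [MvPolynomial.aeval_def, MvPolynomial.eval₂_eq]
  apply Polynomial.natDegree_sum_le_of_forall_le
  intro d hd
  apply le_trans (Polynomial.natDegree_mul_le)
  have h1 : ((algebraMap ℝ (Polynomial ℂ)) (MvPolynomial.coeff d q)).natDegree = 0 := by
    rw [Polynomial.algebraMap_apply]; exact Polynomial.natDegree_C _
  rw [h1, zero_add]
  apply le_trans (Polynomial.natDegree_prod_le _ _)
  calc ∑ i ∈ d.support, (g i ^ d i).natDegree
      ≤ ∑ i ∈ d.support, d i := by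
        apply Finset.sum_le_sum
        intro i _
        calc (g i ^ d i).natDegree ≤ d i * (g i).natDegree := Polynomial.natDegree_pow_le
          _ ≤ d i * 1 := Nat.mul_le_mul_left _ (hg i)
          _ = d i := Nat.mul_one _
    _ ≤ q.totalDegree := MvPolynomial.le_totalDegree hd

lemma aeval_mul_of_isHomogeneous {q : MvPolynomial (Fin ℓ) ℝ} {n : ℕ}
    (hq : q.IsHomogeneous n) (c : ℂ) (g : Fin ℓ → ℂ) :
    MvPolynomial.aeval (fun j => c * g j) q = c ^ n * MvPolynomial.aeval g q := by
  rw [MvPolynomial.aeval_def, MvPolynomial.aeval_def, MvPolynomial.eval₂_eq,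
    MvPolynomial.eval₂_eq, Finset.mul_sum]
  apply Finset.sum_congr rfl
  intro d hd
  have hdn : ∑ i ∈ d.support, d i = n := by
    have := hq (MvPolynomial.mem_support_iff.mp hd)
    rw [← this]
    simp [Finsupp.weight, Finsupp.linearCombination, Finsupp.sum]
  calc (algebraMap ℝ ℂ) (MvPolynomial.coeff d q) * ∏ i ∈ d.support, (c * g i) ^ d i
      = (algebraMap ℝ ℂ) (MvPolynomial.coeff d q) *
          ((∏ i ∈ d.support, c ^ d i) * ∏ i ∈ d.support, g i ^ d i) := by
        rw [← Finset.prod_mul_distrib]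
        simp [mul_pow]
    _ = c ^ n * ((algebraMap ℝ ℂ) (MvPolynomial.coeff d q) * ∏ i ∈ d.support, g i ^ d i) := by
        rw [Finset.prod_pow_eq_pow_sum, hdn]; ring

lemma telescope (N k : ℕ) (hk : k ≤ N) (c : ℕ → ℂ) (hc : ∀ j < k, c j = 0) (s : ℂ) :
    ∑ j ∈ range (N + 1), s ^ j * c j =
      s ^ k * (c k + s * ∑ m ∈ range (N - k), s ^ m * c (k + 1 + m)) := by
  have h1 : ∑ j ∈ range (N + 1), s ^ j * c j = ∑ j ∈ Finset.Ico k (N + 1), s ^ j * c j := by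
    symm
    apply Finset.sum_subset
    · intro x hx
      simp only [Finset.mem_Ico] at hx
      simp only [Finset.mem_range]
      omega
    · intro x hx hnx
      simp only [Finset.mem_range] at hx
      simp only [Finset.mem_Ico, not_and, not_lt] at hnx
      have : x < k := by omega
      rw [hc x this, mul_zero]
  rw [h1, Finset.sum_Ico_eq_sum_range]
  have h2 : N + 1 - k = (N - k) + 1 := by omega
  rw [h2, Finset.sum_range_succ']
  have h3 : ∀ i : ℕ, s ^ (k + (i + 1)) * c (k + (i + 1)) =
      s ^ k * (s * (s ^ i * c (k + 1 + i))) := by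
    intro i
    have : k + (i + 1) = k + 1 + i := by omega
    rw [this, show s ^ (k+1+i) = s ^ k * s * s ^ i by rw [pow_add, pow_add, pow_one]]
    ring
  rw [Finset.sum_congr rfl fun i _ => h3 i, ← Finset.mul_sum, ← Finset.mul_sum]
  simp only [Nat.add_zero]
  rw [mul_add, add_comm (s ^ k * c k)]


lemma le_of_forall_small (A B C : ℝ) (h : ∀ s : ℝ, 0 < s → s ≤ 1 → A ≤ B + s * C) :
    A ≤ B := by
  by_contra hAB
  push_neg at hAB
  have hC : 0 < C := by
    by_contra hC
    push_neg at hC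
    have := h 1 one_pos le_rfl
    nlinarith
  have hs0 : 0 < min 1 ((A - B) / (2 * C)) := by
    apply lt_min one_pos
    apply div_pos (by linarith) (by linarith)
  have := h _ hs0 (min_le_left _ _)
  have h2 : min 1 ((A - B) / (2 * C)) * C ≤ (A - B) / (2 * C) * C :=
    mul_le_mul_of_nonneg_right (min_le_right _ _) hC.le
  have h3 : (A - B) / (2 * C) * C = (A - B) / 2 := by field_simp
  linarith

lemma master {ℓ : ℕ} (p : MvPolynomial (Fin ℓ) ℝ) (k : ℕ)
    (hmin : ∀ j < k, homogeneousComponent j p = 0) (hkN : k ≤ p.totalDegree)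
    (e f : Fin ℓ → ℂ) (z0 w0 : ℂ) (ε : ℝ) (hε : 0 < ε)
    (hroot : ∀ s : ℝ, 0 < s → s ≤ 1 → ∀ ρ : ℂ, ‖w0 - ρ‖ < ε →
      MvPolynomial.aeval (fun j => (s : ℂ) * (e j + ρ * f j)) p ≠ 0) :
    ‖MvPolynomial.aeval (fun j => e j + z0 * f j) (homogeneousComponent k p)‖ ≤
      (1 + ‖z0 - w0‖ / ε) ^ (p.totalDegree + 1) *
        ‖MvPolynomial.aeval (fun j => e j + w0 * f j) (homogeneousComponent k p)‖ := by
  have hM1 : (1:ℝ) ≤ 1 + ‖z0 - w0‖ / ε := le_add_of_nonneg_right (by positivity)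
  set N := p.totalDegree with hN
  set M := 1 + ‖z0 - w0‖ / ε with hMdef
  have hval : ∀ (w : ℂ) (j : ℕ), j < k →
      MvPolynomial.aeval (fun i => e i + w * f i) (homogeneousComponent j p) = 0 := by
    intro w j hj
    simp only [hmin j hj, map_zero]
  have hdecomp : ∀ (s : ℝ) (w : ℂ),
      MvPolynomial.aeval (fun j => (s : ℂ) * (e j + w * f j)) p =
        ∑ j ∈ Finset.range (N + 1), (s : ℂ) ^ j *
          MvPolynomial.aeval (fun i => e i + w * f i) (homogeneousComponent j p) := by
    intro s w
    conv_lhs => rw [← sum_homogeneousComponent p, map_sum]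
    apply Finset.sum_congr rfl
    intro j _
    exact aeval_mul_of_isHomogeneous (homogeneousComponent_isHomogeneous j p) _ _
  have hcomp : ∀ s : ℝ, 0 < s → s ≤ 1 →
      ‖MvPolynomial.aeval (fun i => e i + z0 * f i) (homogeneousComponent k p) +
          s * ∑ m ∈ Finset.range (N - k), (s:ℂ) ^ m *
            MvPolynomial.aeval (fun i => e i + z0 * f i) (homogeneousComponent (k + 1 + m) p)‖ ≤
        M ^ (N + 1) *
          ‖MvPolynomial.aeval (fun i => e i + w0 * f i) (homogeneousComponent k p) +
            s * ∑ m ∈ Finset.range (N - k), (s:ℂ) ^ m *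
              MvPolynomial.aeval (fun i => e i + w0 * f i) (homogeneousComponent (k + 1 + m) p)‖ := by
    intro s hs hs1
    set Hs : Polynomial ℂ := MvPolynomial.aeval
      (fun j => Polynomial.C ((s:ℂ) * e j) + Polynomial.C ((s:ℂ) * f j) * Polynomial.X) p
      with hHs
    have hHeval : ∀ x : ℂ, Hs.eval x =
        MvPolynomial.aeval (fun j => (s : ℂ) * (e j + x * f j)) p := by
      intro x
      rw [hHs, eval_mv_aeval]
      have hfun : (fun j => Polynomial.eval x
          (Polynomial.C ((s:ℂ) * e j) + Polynomial.C ((s:ℂ) * f j) * Polynomial.X)) =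
          fun j => (s:ℂ) * (e j + x * f j) := by
        funext j
        simp only [Polynomial.eval_add, Polynomial.eval_mul, Polynomial.eval_C, Polynomial.eval_X]
        ring
      rw [hfun]
    have hdeg : Hs.natDegree ≤ N := by
      apply natDegree_aeval_le
      intro i
      apply le_trans (Polynomial.natDegree_add_le _ _)
      simp only [Polynomial.natDegree_C, zero_le, max_le_iff, true_and]
      apply le_trans (Polynomial.natDegree_mul_le)
      simp only [Polynomial.natDegree_C, Polynomial.natDegree_X, zero_add, le_refl]
    have hroots : ∀ ρ ∈ Hs.roots, ε ≤ ‖w0 - ρ‖ := by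
      intro ρ hρ
      by_contra hlt
      push_neg at hlt
      have := hroot s hs hs1 ρ hlt
      rw [← hHeval] at this
      exact this ((Polynomial.mem_roots'.mp hρ).2)
    have hcmp := compare_eval hε Hs z0 w0 hroots
    rw [hHeval z0, hHeval w0, hdecomp s z0, hdecomp s w0,
      telescope N k hkN _ (hval z0) _, telescope N k hkN _ (hval w0) _] at hcmp
    have hsk : ‖((s:ℂ)) ^ k‖ = s ^ k := by
      rw [norm_pow, Complex.norm_real, Real.norm_eq_abs, abs_of_pos hs]
    rw [norm_mul, norm_mul, hsk] at hcmp
    have hMpow : (M : ℝ) ^ Hs.natDegree ≤ M ^ (N + 1) :=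
      pow_le_pow_right₀ hM1 (le_trans hdeg (Nat.le_succ N))
    have hskpos : (0:ℝ) < s ^ k := by positivity
    have h2 := le_trans hcmp (mul_le_mul_of_nonneg_right hMpow (by positivity))
    rw [mul_comm (M ^ (N+1)) (s ^ k * _), mul_assoc] at h2
    exact le_of_mul_le_mul_left (le_of_le_of_eq h2 (by ring)) hskpos
  -- tail bounds
  have htail : ∀ (w : ℂ) (s : ℝ), 0 < s → s ≤ 1 →
      ‖∑ m ∈ Finset.range (N - k), (s:ℂ) ^ m *
          MvPolynomial.aeval (fun i => e i + w * f i) (homogeneousComponent (k + 1 + m) p)‖ ≤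
        ∑ m ∈ Finset.range (N - k),
          ‖MvPolynomial.aeval (fun i => e i + w * f i) (homogeneousComponent (k + 1 + m) p)‖ := by
    intro w s hs hs1
    apply le_trans (norm_sum_le _ _)
    apply Finset.sum_le_sum
    intro m _
    rw [norm_mul, norm_pow, Complex.norm_real, Real.norm_eq_abs, abs_of_pos hs]
    calc s ^ m * ‖MvPolynomial.aeval (fun i => e i + w * f i) (homogeneousComponent (k+1+m) p)‖
        ≤ 1 * ‖MvPolynomial.aeval (fun i => e i + w * f i) (homogeneousComponent (k+1+m) p)‖ :=
          mul_le_mul_of_nonneg_right (pow_le_one₀ hs.le hs1) (norm_nonneg _)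
      _ = _ := one_mul _
  apply le_of_forall_small _ _
    (M ^ (N+1) * (∑ m ∈ Finset.range (N - k),
        ‖MvPolynomial.aeval (fun i => e i + w0 * f i) (homogeneousComponent (k + 1 + m) p)‖) +
      ∑ m ∈ Finset.range (N - k),
        ‖MvPolynomial.aeval (fun i => e i + z0 * f i) (homogeneousComponent (k + 1 + m) p)‖)
  intro s hs hs1
  have hc := hcomp s hs hs1
  have hTz := htail z0 s hs hs1
  have hTw := htail w0 s hs hs1
  have hsnorm : ‖((s:ℂ))‖ = s := by
    rw [Complex.norm_real, Real.norm_eq_abs, abs_of_pos hs]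
  have e1 : ‖MvPolynomial.aeval (fun i => e i + z0 * f i) (homogeneousComponent k p)‖ ≤
      ‖MvPolynomial.aeval (fun i => e i + z0 * f i) (homogeneousComponent k p) +
        s * ∑ m ∈ Finset.range (N - k), (s:ℂ) ^ m *
          MvPolynomial.aeval (fun i => e i + z0 * f i) (homogeneousComponent (k + 1 + m) p)‖ +
      s * ∑ m ∈ Finset.range (N - k),
          ‖MvPolynomial.aeval (fun i => e i + z0 * f i) (homogeneousComponent (k + 1 + m) p)‖ := by
    have htri := norm_sub_le
      (MvPolynomial.aeval (fun i => e i + z0 * f i) (homogeneousComponent k p) +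
        s * ∑ m ∈ Finset.range (N - k), (s:ℂ) ^ m *
          MvPolynomial.aeval (fun i => e i + z0 * f i) (homogeneousComponent (k + 1 + m) p))
      ((s:ℂ) * ∑ m ∈ Finset.range (N - k), (s:ℂ) ^ m *
          MvPolynomial.aeval (fun i => e i + z0 * f i) (homogeneousComponent (k + 1 + m) p))
    rw [add_sub_cancel_right] at htri
    have hb : ‖(s:ℂ) * ∑ m ∈ Finset.range (N - k), (s:ℂ) ^ m *
        MvPolynomial.aeval (fun i => e i + z0 * f i) (homogeneousComponent (k + 1 + m) p)‖ ≤
        s * ∑ m ∈ Finset.range (N - k),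
          ‖MvPolynomial.aeval (fun i => e i + z0 * f i) (homogeneousComponent (k + 1 + m) p)‖ := by
      rw [norm_mul, hsnorm]
      exact mul_le_mul_of_nonneg_left hTz hs.le
    linarith
  have e2 : ‖MvPolynomial.aeval (fun i => e i + w0 * f i) (homogeneousComponent k p) +
        s * ∑ m ∈ Finset.range (N - k), (s:ℂ) ^ m *
          MvPolynomial.aeval (fun i => e i + w0 * f i) (homogeneousComponent (k + 1 + m) p)‖ ≤
      ‖MvPolynomial.aeval (fun i => e i + w0 * f i) (homogeneousComponent k p)‖ +
        s * ∑ m ∈ Finset.range (N - k),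
          ‖MvPolynomial.aeval (fun i => e i + w0 * f i) (homogeneousComponent (k + 1 + m) p)‖ := by
    apply le_trans (norm_add_le _ _)
    have hb : ‖(s:ℂ) * ∑ m ∈ Finset.range (N - k), (s:ℂ) ^ m *
        MvPolynomial.aeval (fun i => e i + w0 * f i) (homogeneousComponent (k + 1 + m) p)‖ ≤
        s * ∑ m ∈ Finset.range (N - k),
          ‖MvPolynomial.aeval (fun i => e i + w0 * f i) (homogeneousComponent (k + 1 + m) p)‖ := by
      rw [norm_mul, hsnorm]
      exact mul_le_mul_of_nonneg_left hTw hs.le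
    linarith
  have hMN : (0:ℝ) < M ^ (N+1) := by positivity
  have e3 := mul_le_mul_of_nonneg_left e2 hMN.le
  nlinarith [hc, e1, e3]

lemma exists_delta {ℓ : ℕ} (F G : Fin ℓ → ℝ) (hF : ∀ j, 0 < F j) :
    ∃ δ : ℝ, 0 < δ ∧ ∀ y : ℝ, |y| < δ → ∀ j, 0 < F j + y * G j := by
  set T : Finset ℝ := insert 1 (Finset.univ.image fun j => F j / (1 + |G j|)) with hT
  have hTne : T.Nonempty := ⟨1, Finset.mem_insert_self _ _⟩
  refine ⟨T.min' hTne, ?_, ?_⟩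
  · have := T.min'_mem hTne
    rcases Finset.mem_insert.mp this with h | h
    · rw [h]; norm_num
    · obtain ⟨j, _, hj⟩ := Finset.mem_image.mp h
      rw [← hj]
      apply div_pos (hF j)
      positivity
  · intro y hy j
    have hmem : F j / (1 + |G j|) ∈ T := by
      exact Finset.mem_insert_of_mem (Finset.mem_image.mpr ⟨j, Finset.mem_univ j, rfl⟩)
    have hle : T.min' hTne ≤ F j / (1 + |G j|) := Finset.min'_le _ _ hmem
    have h1 : 0 < 1 + |G j| := by positivity
    have h2 : T.min' hTne * (1 + |G j|) ≤ F j := by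
      rw [← le_div_iff₀ h1]; exact hle
    have h3 : -(|y| * |G j|) ≤ y * G j := by
      rw [← abs_mul]; exact neg_abs_le _
    nlinarith [abs_nonneg y, abs_nonneg (G j)]

lemma stable_nonvanishing {ℓ : ℕ} {p : MvPolynomial (Fin ℓ) ℝ} (hp : IsStable p)
    (w : Fin ℓ → ℂ) (hw : ∀ j, 0 < (w j).im) : MvPolynomial.aeval w p ≠ 0 := by
  obtain ⟨hq0, hqroots⟩ := hp (fun j => (w j).im) (fun j => (w j).re) hw
  intro hcon
  have hfun : (fun j => Polynomial.aeval Complex.I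
      (Polynomial.C ((w j).im) * Polynomial.X + Polynomial.C ((w j).re))) = w := by
    funext i
    simp only [map_add, map_mul, Polynomial.aeval_C, Polynomial.aeval_X, Complex.coe_algebraMap]
    simp [Complex.ext_iff]
  have hval : Polynomial.aeval Complex.I
      (MvPolynomial.aeval (fun i => Polynomial.C ((w i).im) * Polynomial.X +
        Polynomial.C ((w i).re)) p) = MvPolynomial.aeval w p := by
    rw [aeval_mv_aeval, hfun]
  have := hqroots Complex.I (by rw [hval, hcon])
  simp [Complex.I_im] at this

lemma claimC {ℓ : ℕ} {p : MvPolynomial (Fin ℓ) ℝ} (hp : IsStable p) {k : ℕ}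
    (hk : homogeneousComponent k p ≠ 0) (hmin : ∀ j < k, homogeneousComponent j p = 0)
    (A B : Fin ℓ → ℝ) (hA : ∀ i, 0 < A i) :
    MvPolynomial.aeval (fun j => ((B j : ℂ)) + Complex.I * ((A j : ℂ)))
      (homogeneousComponent k p) ≠ 0 := by
  have hkN : k ≤ p.totalDegree := by
    by_contra h
    push_neg at h
    exact hk (homogeneousComponent_eq_zero _ _ h)
  -- a real point where the component is nonzero
  have hu : ∃ u : Fin ℓ → ℝ, MvPolynomial.eval u (homogeneousComponent k p) ≠ 0 := by
    by_contra h
    push_neg at h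
    exact hk (MvPolynomial.funext fun x => by rw [h x, map_zero])
  obtain ⟨u, hu⟩ := hu
  -- a good parameter t
  set φ : Polynomial ℂ := MvPolynomial.aeval
    (fun j => Polynomial.C ((u j : ℂ)) + Polynomial.C (Complex.I * (A j : ℂ)) * Polynomial.X)
    (homogeneousComponent k p) with hφdef
  have hφ0 : φ.eval 0 = ((MvPolynomial.eval u (homogeneousComponent k p) : ℝ) : ℂ) := by
    rw [hφdef, eval_mv_aeval]
    have hfun : (fun j => Polynomial.eval 0
        (Polynomial.C ((u j : ℂ)) + Polynomial.C (Complex.I * (A j : ℂ)) * Polynomial.X)) =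
        fun j => ((u j : ℝ) : ℂ) := by
      funext j
      simp
    rw [hfun, aeval_real_cast]
  have hφne : φ ≠ 0 := by
    intro h
    rw [h] at hφ0
    simp only [Polynomial.eval_zero] at hφ0
    exact hu (by exact_mod_cast hφ0.symm)
  obtain ⟨t, htIoc, htroots⟩ := (Set.Ioc_infinite (zero_lt_one (α := ℝ))).exists_notMem_finset
    (φ.roots.toFinset.image Complex.re)
  have ht0 : 0 < t := htIoc.1
  have ht1 : t ≤ 1 := htIoc.2
  have hφt : φ.eval (t : ℂ) ≠ 0 := by
    intro h0
    exact htroots (Finset.mem_image.mpr ⟨(t : ℂ),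
      Multiset.mem_toFinset.mpr (Polynomial.mem_roots'.mpr ⟨hφne, h0⟩), by simp⟩)
  have hX1 : MvPolynomial.aeval (fun j => ((u j : ℂ)) + Complex.I * (A j : ℂ) * (t : ℂ))
      (homogeneousComponent k p) ≠ 0 := by
    intro h0
    apply hφt
    rw [hφdef, eval_mv_aeval]
    have hfun : (fun j => Polynomial.eval (t:ℂ)
        (Polynomial.C ((u j : ℂ)) + Polynomial.C (Complex.I * (A j : ℂ)) * Polynomial.X)) =
        fun j => ((u j : ℂ)) + Complex.I * (A j : ℂ) * (t : ℂ) := by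
      funext j
      simp
    rw [hfun, h0]
  -- path 1 : from (itA + B) to (itA + u)
  obtain ⟨δ, hδ0, hδ⟩ := exists_delta (fun j => t * A j) (fun j => u j - B j)
    (fun j => mul_pos ht0 (hA j))
  have hY : MvPolynomial.aeval (fun j => Complex.I * ((t * A j : ℝ) : ℂ) + ((B j : ℝ) : ℂ))
      (homogeneousComponent k p) ≠ 0 := by
    intro hY0
    have hroot1 : ∀ s : ℝ, 0 < s → s ≤ 1 → ∀ ρ : ℂ, ‖(0:ℂ) - ρ‖ < δ →
        MvPolynomial.aeval (fun j => (s : ℂ) *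
          ((Complex.I * ((t * A j : ℝ) : ℂ) + ((B j : ℝ) : ℂ)) + ρ * ((u j - B j : ℝ) : ℂ))) p
          ≠ 0 := by
      intro s hs hs1 ρ hρ
      apply stable_nonvanishing hp
      intro j
      have him : |ρ.im| < δ := by
        rw [zero_sub, norm_neg] at hρ
        exact lt_of_le_of_lt (Complex.abs_im_le_norm ρ) hρ
      have hpos := hδ ρ.im him j
      have himeq : ((s : ℂ) * ((Complex.I * ((t * A j : ℝ) : ℂ) + ((B j : ℝ) : ℂ)) +
          ρ * ((u j - B j : ℝ) : ℂ))).im = s * (t * A j + ρ.im * (u j - B j)) := by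
        simp [Complex.mul_im, Complex.add_im, Complex.mul_re, Complex.add_re]
      rw [himeq]
      exact mul_pos hs hpos
    have hm := master p k hmin hkN
      (fun j => Complex.I * ((t * A j : ℝ) : ℂ) + ((B j : ℝ) : ℂ))
      (fun j => ((u j - B j : ℝ) : ℂ)) 1 0 δ hδ0 hroot1
    have hL : (fun j => (Complex.I * ((t * A j : ℝ) : ℂ) + ((B j : ℝ) : ℂ)) +
        (1:ℂ) * ((u j - B j : ℝ) : ℂ)) =
        fun j => ((u j : ℂ)) + Complex.I * (A j : ℂ) * (t : ℂ) := by
      funext j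
      push_cast
      ring
    have hR : (fun j => (Complex.I * ((t * A j : ℝ) : ℂ) + ((B j : ℝ) : ℂ)) +
        (0:ℂ) * ((u j - B j : ℝ) : ℂ)) =
        fun j => Complex.I * ((t * A j : ℝ) : ℂ) + ((B j : ℝ) : ℂ) := by
      funext j
      ring
    rw [hL, hR, hY0] at hm
    simp only [norm_zero, mul_zero] at hm
    exact hX1 (norm_le_zero_iff.mp hm)
  -- path 2 : from (itA + B) to (iA + B)
  intro hfin
  have hroot2 : ∀ s : ℝ, 0 < s → s ≤ 1 → ∀ ρ : ℂ, ‖(1:ℂ) - ρ‖ < 1/2 →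
      MvPolynomial.aeval (fun j => (s : ℂ) *
        ((Complex.I * ((t * A j : ℝ) : ℂ) + ((B j : ℝ) : ℂ)) +
          ρ * (Complex.I * (((1 - t) * A j : ℝ) : ℂ)))) p ≠ 0 := by
    intro s hs hs1 ρ hρ
    apply stable_nonvanishing hp
    intro j
    have hre : 1/2 < ρ.re := by
      have h1 : |(1:ℝ) - ρ.re| < 1/2 := by
        have : |((1:ℂ) - ρ).re| ≤ ‖(1:ℂ) - ρ‖ := by
          exact Complex.abs_re_le_norm _
        simp only [Complex.sub_re, Complex.one_re] at this
        linarith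
      cases abs_lt.mp h1 with
      | intro hl hr => linarith
    have himeq : ((s : ℂ) * ((Complex.I * ((t * A j : ℝ) : ℂ) + ((B j : ℝ) : ℂ)) +
        ρ * (Complex.I * (((1 - t) * A j : ℝ) : ℂ)))).im =
        s * (t * A j + ρ.re * ((1 - t) * A j)) := by
      simp [Complex.mul_im, Complex.add_im, Complex.mul_re, Complex.add_re]
    rw [himeq]
    apply mul_pos hs
    have h1 : 0 ≤ (1 - t) * A j := mul_nonneg (by linarith) (hA j).le
    have h2 : (1/2) * ((1-t) * A j) ≤ ρ.re * ((1-t) * A j) :=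
      mul_le_mul_of_nonneg_right hre.le h1
    nlinarith [mul_pos ht0 (hA j)]
  have hm := master p k hmin hkN
    (fun j => Complex.I * ((t * A j : ℝ) : ℂ) + ((B j : ℝ) : ℂ))
    (fun j => Complex.I * (((1 - t) * A j : ℝ) : ℂ)) 0 1 (1/2) (by norm_num) hroot2
  have hL : (fun j => (Complex.I * ((t * A j : ℝ) : ℂ) + ((B j : ℝ) : ℂ)) +
      (0:ℂ) * (Complex.I * (((1 - t) * A j : ℝ) : ℂ))) =
      fun j => Complex.I * ((t * A j : ℝ) : ℂ) + ((B j : ℝ) : ℂ) := by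
    funext j
    ring
  have hR : (fun j => (Complex.I * ((t * A j : ℝ) : ℂ) + ((B j : ℝ) : ℂ)) +
      (1:ℂ) * (Complex.I * (((1 - t) * A j : ℝ) : ℂ))) =
      fun j => ((B j : ℂ)) + Complex.I * ((A j : ℂ)) := by
    funext j
    push_cast
    ring
  rw [hL, hR, hfin] at hm
  simp only [norm_zero, mul_zero] at hm
  exact hY (norm_le_zero_iff.mp hm)


end Helpers

/-- The lowest nonzero homogeneous component of a nonzero stable polynomial is
again stable. -/
theorem stmt19 (ℓ : ℕ) (p : MvPolynomial (Fin ℓ) ℝ) (hp0 : p ≠ 0) (hp : IsStable p)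
    (k : ℕ) (hk : homogeneousComponent k p ≠ 0)
    (hmin : ∀ j < k, homogeneousComponent j p = 0) :
    IsStable (homogeneousComponent k p) := by
  have hkN : k ≤ p.totalDegree := by
    by_contra h
    push_neg at h
    exact hk (homogeneousComponent_eq_zero _ _ h)
  intro a b ha
  set g : Polynomial ℝ := MvPolynomial.aeval
    (fun i => Polynomial.C (a i) * Polynomial.X + Polynomial.C (b i))
    (homogeneousComponent k p) with hgdef
  have hgI : Polynomial.aeval Complex.I g =
      MvPolynomial.aeval (fun j => ((b j : ℂ)) + Complex.I * ((a j : ℂ)))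
        (homogeneousComponent k p) := by
    rw [hgdef, aeval_mv_aeval]
    have hfun : (fun j => Polynomial.aeval Complex.I
        (Polynomial.C (a j) * Polynomial.X + Polynomial.C (b j))) =
        fun j => ((b j : ℂ)) + Complex.I * ((a j : ℂ)) := by
      funext j
      simp only [map_add, map_mul, Polynomial.aeval_C, Polynomial.aeval_X, Complex.coe_algebraMap]
      simp [Complex.ext_iff]
    rw [hfun]
  have hgne : g ≠ 0 := by
    intro h0
    apply claimC hp hk hmin a b ha
    rw [← hgI, h0, map_zero]
  refine ⟨hgne, ?_⟩
  intro z hz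
  by_contra him
  -- a real point where g is nonzero
  have ht0 : ∃ t0 : ℝ, Polynomial.eval t0 g ≠ 0 := by
    by_contra h
    push_neg at h
    exact hgne (Polynomial.zero_of_eval_zero g h)
  obtain ⟨t0, ht0⟩ := ht0
  have hroot : ∀ s : ℝ, 0 < s → s ≤ 1 → ∀ ρ : ℂ, ‖z - ρ‖ < |z.im| →
      MvPolynomial.aeval (fun j => (s : ℂ) * (((b j : ℝ) : ℂ) + ρ * ((a j : ℝ) : ℂ))) p ≠ 0 := by
    intro s hs hs1 ρ hρ
    have hρim : ρ.im ≠ 0 := by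
      intro h0
      have h1 : |(z - ρ).im| ≤ ‖z - ρ‖ := by
        exact Complex.abs_im_le_norm _
      simp only [Complex.sub_im, h0, sub_zero] at h1
      linarith [lt_of_le_of_lt h1 hρ]
    obtain ⟨hq0, hqroots⟩ := hp (fun i => s * a i) (fun i => s * b i)
      (fun i => mul_pos hs (ha i))
    intro hcon
    apply hρim
    apply hqroots ρ
    rw [aeval_mv_aeval]
    have hfun : (fun i => Polynomial.aeval ρ
        (Polynomial.C (s * a i) * Polynomial.X + Polynomial.C (s * b i))) =
        fun j => (s : ℂ) * (((b j : ℝ) : ℂ) + ρ * ((a j : ℝ) : ℂ)) := by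
      funext i
      simp only [map_add, map_mul, Polynomial.aeval_C, Polynomial.aeval_X, Complex.coe_algebraMap]
      push_cast
      ring
    rw [hfun]
    exact hcon
  have hm := master p k hmin hkN (fun j => ((b j : ℝ) : ℂ)) (fun j => ((a j : ℝ) : ℂ))
    (t0 : ℂ) z |z.im| (abs_pos.mpr him) hroot
  have hR : (fun j => ((b j : ℝ) : ℂ) + z * ((a j : ℝ) : ℂ)) =
      fun j => Polynomial.aeval z (Polynomial.C (a j) * Polynomial.X + Polynomial.C (b j)) := by
    funext j
    simp only [map_add, map_mul, Polynomial.aeval_C, Polynomial.aeval_X, Complex.coe_algebraMap]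
    push_cast
    ring
  have hRz : MvPolynomial.aeval (fun j => ((b j : ℝ) : ℂ) + z * ((a j : ℝ) : ℂ))
      (homogeneousComponent k p) = 0 := by
    rw [hR, ← aeval_mv_aeval, ← hgdef, hz]
  have hL : (fun j => ((b j : ℝ) : ℂ) + (t0 : ℂ) * ((a j : ℝ) : ℂ)) =
      fun j => ((a j * t0 + b j : ℝ) : ℂ) := by
    funext j
    push_cast
    ring
  have hLt : MvPolynomial.aeval (fun j => ((b j : ℝ) : ℂ) + (t0 : ℂ) * ((a j : ℝ) : ℂ))
      (homogeneousComponent k p) =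
      ((Polynomial.eval t0 g : ℝ) : ℂ) := by
    rw [hL, aeval_real_cast]
    congr 1
    rw [hgdef, eval_mv_aeval]
    have hfun : (fun j => Polynomial.eval t0
        (Polynomial.C (a j) * Polynomial.X + Polynomial.C (b j))) =
        fun j => a j * t0 + b j := by
      funext j
      simp
    rw [hfun]
    rfl
  rw [hRz, hLt] at hm
  simp only [norm_zero, mul_zero] at hm
  exact ht0 (by exact_mod_cast norm_le_zero_iff.mp hm)
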